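/- arXiv:2603.21949 — 2 statements merged into one kernel-verified Lean document; each statement's English description precedes it below -/
import Mathlib

section
/- For the RKNL machine, the β-transition increases potential by less than the potential of the source term: if k is reachable from an initial term t₀ and k steps to k' by transition (6), then Φ(k) + Φt(t₀) > Φ(k'). -/
set_option autoImplicit false
set_option maxHeartbeats 1000000

namespace RKNL

/- Pure lambda terms over a type of variables. -/
inductive Tm (V : Type) : Type
  | var : V → Tm V
  | app : Tm V → Tm V → Tm V
  | lam : V → Tm V → Tm V
  deriving DecidableEq

abbrev Ident : Type := ℕ
abbrev Loc : Type := ℕ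

/-- Lookup in an association list (first match). -/
def lookupL {β : Type} : List (ℕ × β) → ℕ → Option β
  | [], _ => none
  | (a, b) :: l, x => if x = a then some b else lookupL l x

/-- Update of an association list. -/
def updL {β : Type} (l : List (ℕ × β)) (x : ℕ) (b : β) : List (ℕ × β) :=
  l.map fun p => if p.1 = x then (x, b) else p

/-- Environments map identifiers to store locations. -/
abbrev Env : Type := List (Ident × Loc)

/-- Closures pair a term with an environment. -/
abbrev Closure : Type := Tm Ident × Env

/-- Values: terms (normal forms), or abstraction closures annotated with a location. -/
inductive Value : Type
  | tm : Tm Ident → Value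
  | abs : Ident → Tm Ident → Env → Loc → Value
  deriving DecidableEq

/-- Storable values (memothunks):
`pend x t e` is the `todo ⊥` placeholder allocated for the abstraction `(λx.t, e)`,
`todo c` an unevaluated argument thunk, `done v` a memoized value. -/
inductive Storable : Type
  | pend : Ident → Tm Ident → Env → Storable
  | todo : Closure → Storable
  | done : Value → Storable
  deriving DecidableEq

/-- Stores map locations to storable values. -/
abbrev Store : Type := List (Loc × Storable)

/-- Stack frames: `arg c` is `(□ c)`, `appL t` is `(t □)`, `lamF x` is `λx.□`,
`cache ℓ` is `ℓ := □`. -/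
inductive Frame : Type
  | arg : Closure → Frame
  | appL : Tm Ident → Frame
  | lamF : Ident → Frame
  | cache : Loc → Frame
  deriving DecidableEq

abbrev Stack : Type := List Frame

/-- Machine configurations: evaluation mode `⟨c, s, σ⟩▸` and continue mode `⟨σ, v, s⟩◂`. -/
inductive Conf : Type
  | eval : Closure → Stack → Store → Conf
  | cont : Store → Value → Stack → Conf

/-- The initial configuration loading a term. -/
def Conf.init (t : Tm Ident) : Conf := .eval (t, []) [] []

def Conf.store : Conf → Store
  | .eval _ _ σ => σ
  | .cont σ _ _ => σ

def Conf.stack : Conf → Stack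
  | .eval _ s _ => s
  | .cont _ _ s => s

/- Identifiers occurring in a configuration (used for freshness of generated names). -/
def tmVars : Tm Ident → List Ident
  | .var x => [x]
  | .app a b => tmVars a ++ tmVars b
  | .lam x t => x :: tmVars t

def envVars (e : Env) : List Ident := e.map Prod.fst

def valVars : Value → List Ident
  | .tm t => tmVars t
  | .abs x t e _ => x :: (tmVars t ++ envVars e)

def storableVars : Storable → List Ident
  | .pend x t e => x :: (tmVars t ++ envVars e)
  | .todo c => tmVars c.1 ++ envVars c.2
  | .done v => valVars v

def frameVars : Frame → List Ident
  | .arg c => tmVars c.1 ++ envVars c.2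
  | .appL t => tmVars t
  | .lamF x => [x]
  | .cache _ => []

def stackVars (s : Stack) : List Ident := s.foldr (fun f acc => frameVars f ++ acc) []

def storeVars (σ : Store) : List Ident := σ.foldr (fun p acc => storableVars p.2 ++ acc) []

def confVars : Conf → List Ident
  | .eval c s σ => tmVars c.1 ++ envVars c.2 ++ stackVars s ++ storeVars σ
  | .cont σ v s => valVars v ++ stackVars s ++ storeVars σ

/-- The top of the stack is not an argument frame. -/
def Stack.noArgTop : Stack → Prop
  | Frame.arg _ :: _ => False
  | _ => True

/-- The top of the stack is not a memoization frame. -/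
def Stack.noCacheTop : Stack → Prop
  | Frame.cache _ :: _ => False
  | _ => True

/-- The eleven transitions of the RKNL abstract machine, indexed by rule number. -/
inductive Step : ℕ → Conf → Conf → Prop
  | r1 {t1 t2 : Tm Ident} {e : Env} {s : Stack} {σ : Store} :
      Step 1 (.eval (.app t1 t2, e) s σ) (.eval (t1, e) (.arg (t2, e) :: s) σ)
  | r2 {x : Ident} {t : Tm Ident} {e : Env} {s : Stack} {σ : Store} {ℓ : Loc}
      (h : lookupL σ ℓ = none) :
      Step 2 (.eval (.lam x t, e) s σ) (.cont ((ℓ, .pend x t e) :: σ) (.abs x t e ℓ) s)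
  | r3 {x : Ident} {e e2 : Env} {s : Stack} {σ : Store} {ℓ : Loc} {t : Tm Ident}
      (he : lookupL e x = some ℓ) (hσ : lookupL σ ℓ = some (.todo (t, e2))) :
      Step 3 (.eval (.var x, e) s σ) (.eval (t, e2) (.cache ℓ :: s) σ)
  | r4done {x : Ident} {e : Env} {s : Stack} {σ : Store} {ℓ : Loc} {v : Value}
      (he : lookupL e x = some ℓ) (hσ : lookupL σ ℓ = some (.done v)) :
      Step 4 (.eval (.var x, e) s σ) (.cont σ v s)
  | r4free {x : Ident} {e : Env} {s : Stack} {σ : Store}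
      (he : lookupL e x = none) :
      Step 4 (.eval (.var x, e) s σ) (.cont σ (.tm (.var x)) s)
  | r5 {σ : Store} {v : Value} {ℓ : Loc} {s : Stack} :
      Step 5 (.cont σ v (.cache ℓ :: s)) (.cont (updL σ ℓ (.done v)) v s)
  | r6 {σ : Store} {x : Ident} {t t2 : Tm Ident} {e e2 : Env} {ℓ ℓ2 : Loc} {s : Stack}
      (h : lookupL σ ℓ2 = none) :
      Step 6 (.cont σ (.abs x t e ℓ) (.arg (t2, e2) :: s))
             (.eval (t, (x, ℓ2) :: e) s ((ℓ2, .todo (t2, e2)) :: σ))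
  | r7 {σ : Store} {x x' x0 : Ident} {t t0 : Tm Ident} {e e0 : Env} {ℓ ℓ2 : Loc} {s : Stack}
      (hσ : lookupL σ ℓ = some (.pend x0 t0 e0))
      (hs1 : Stack.noArgTop s) (hs2 : Stack.noCacheTop s)
      (hℓ2 : lookupL σ ℓ2 = none)
      (hx' : x' ∉ confVars (.cont σ (.abs x t e ℓ) s)) :
      Step 7 (.cont σ (.abs x t e ℓ) s)
             (.eval (t, (x, ℓ2) :: e) (.lamF x' :: .cache ℓ :: s)
                    ((ℓ2, .done (.tm (.var x'))) :: σ))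
  | r8 {σ : Store} {x : Ident} {t : Tm Ident} {e : Env} {ℓ : Loc} {s : Stack} {v : Value}
      (hσ : lookupL σ ℓ = some (.done v))
      (hs1 : Stack.noArgTop s) (hs2 : Stack.noCacheTop s) :
      Step 8 (.cont σ (.abs x t e ℓ) s) (.cont σ v s)
  | r9 {σ : Store} {t t2 : Tm Ident} {e2 : Env} {s : Stack} :
      Step 9 (.cont σ (.tm t) (.arg (t2, e2) :: s)) (.eval (t2, e2) (.appL t :: s) σ)
  | r10 {σ : Store} {t1 t2 : Tm Ident} {s : Stack} :
      Step 10 (.cont σ (.tm t2) (.appL t1 :: s)) (.cont σ (.tm (.app t1 t2)) s)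
  | r11 {σ : Store} {t : Tm Ident} {x : Ident} {s : Stack} :
      Step 11 (.cont σ (.tm t) (.lamF x :: s)) (.cont σ (.tm (.lam x t)) s)

/-- Reachability by machine transitions. -/
inductive Reach (k0 : Conf) : Conf → Prop
  | refl : Reach k0 k0
  | step {k k' : Conf} {r : ℕ} : Reach k0 k → Step r k k' → Reach k0 k'

/-- The potential of a term. -/
def Φt : Tm Ident → ℕ
  | .var _ => 2
  | .app a b => 3 + Φt a + Φt b
  | .lam _ t => 4 + Φt t

/-- The potential of a value. -/
def Φv : Value → ℕ
  | .tm _ => 0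
  | .abs _ _ _ _ => 1

/-- The potential of a stack frame. -/
def Φf : Frame → ℕ
  | .arg c => 2 + Φt c.1
  | .appL _ => 1
  | .lamF _ => 1
  | .cache _ => 1

/-- The potential of a stack. -/
def Φs (s : Stack) : ℕ := s.foldr (fun f acc => Φf f + acc) 0

/-- Contribution of a single store entry to the store potential,
relative to a stack `s`: locations whose memoization frame `ℓ := □`
is on the stack contribute nothing; an unevaluated argument thunk `todo (t, e)`
contributes `Φt t`; an unnormalized abstraction placeholder (`todo ⊥`, allocated
for the abstraction with body `t`) contributes `2 + Φt t`; memoized values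
contribute nothing. -/
def Φσentry (s : Stack) (p : Loc × Storable) : ℕ :=
  if Frame.cache p.1 ∈ s then 0
  else
    match p.2 with
    | .todo c => Φt c.1
    | .pend _ t _ => 2 + Φt t
    | .done _ => 0

/-- The potential of a store (relative to a stack). -/
def Φσ (σ : Store) (s : Stack) : ℕ := σ.foldr (fun p acc => Φσentry s p + acc) 0

/-- The potential of a configuration. -/
def Φ : Conf → ℕ
  | .eval c s σ => Φt c.1 + Φs s + Φσ σ s
  | .cont σ v s => Φv v + Φs s + Φσ σ s

/-! The β-rule replaces the abstraction value (potential 1) by its body `t` and moves the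
argument thunk from the stack (worth `2 + Φt t₂`) into the store (worth at most `Φt t₂`), so the
potential grows by at most `Φt t - 3`. Every transition keeps all code to be run a subterm of the
source term `t₀`, so `λx.t` is a subterm of `t₀` and `Φt t < Φt t₀`. -/

inductive Tm.Subterm {V : Type} : Tm V → Tm V → Prop
  | refl (t : Tm V) : Subterm t t
  | appL {u a b : Tm V} : Subterm u a → Subterm u (.app a b)
  | appR {u a b : Tm V} : Subterm u b → Subterm u (.app a b)
  | lam {u t : Tm V} {x : V} : Subterm u t → Subterm u (.lam x t)

namespace Tm.Subterm

variable {V : Type}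

theorem trans {a b c : Tm V} (hab : Subterm a b) (hbc : Subterm b c) :
    Subterm a c := by
  induction hbc with
  | refl => exact hab
  | appL _ ih => exact appL ih
  | appR _ ih => exact appR ih
  | lam _ ih => exact lam ih

theorem of_app_left {a b t : Tm V} (h : Subterm (.app a b) t) : Subterm a t :=
  (appL (refl a)).trans h

theorem of_app_right {a b t : Tm V} (h : Subterm (.app a b) t) : Subterm b t :=
  (appR (refl b)).trans h

theorem of_lam {x : V} {u t : Tm V} (h : Subterm (.lam x u) t) : Subterm u t :=
  (lam (refl u)).trans h

theorem Φt_le {u t : Tm Ident} (h : Subterm u t) : Φt u ≤ Φt t := by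
  induction h with
  | refl => exact le_rfl
  | appL _ ih | appR _ ih | lam _ ih => simp only [Φt]; omega

end Tm.Subterm

theorem mem_of_lookupL_eq_some {β : Type} {l : List (ℕ × β)} {x : ℕ} {b : β}
    (h : lookupL l x = some b) : (x, b) ∈ l := by
  induction l with
  | nil => simp [lookupL] at h
  | cons p l ih =>
    rw [lookupL] at h
    split_ifs at h with hx
    · cases h; simp [hx]
    · exact List.mem_cons_of_mem _ (ih h)

theorem mem_updL {β : Type} {l : List (ℕ × β)} {x : ℕ} {b : β} {p : ℕ × β}
    (h : p ∈ updL l x b) : p ∈ l ∨ p = (x, b) := by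
  obtain ⟨q, hq, rfl⟩ := List.mem_map.1 h
  split_ifs
  exacts [Or.inr rfl, Or.inl hq]

-- Normal forms `Value.tm` are assembled by the machine, so they need not be subterms of `t0`.
def Value.FromSource (t0 : Tm Ident) : Value → Prop
  | .tm _ => True
  | .abs x t _ _ => (Tm.lam x t).Subterm t0

def Storable.FromSource (t0 : Tm Ident) : Storable → Prop
  | .pend x t _ => (Tm.lam x t).Subterm t0
  | .todo c => c.1.Subterm t0
  | .done v => v.FromSource t0

def Frame.FromSource (t0 : Tm Ident) : Frame → Prop
  | .arg c => c.1.Subterm t0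
  | _ => True

def Stack.FromSource (t0 : Tm Ident) (s : Stack) : Prop := ∀ f ∈ s, f.FromSource t0

def Store.FromSource (t0 : Tm Ident) (σ : Store) : Prop := ∀ p ∈ σ, p.2.FromSource t0

def Conf.FromSource (t0 : Tm Ident) : Conf → Prop
  | .eval c s σ => c.1.Subterm t0 ∧ Stack.FromSource t0 s ∧ Store.FromSource t0 σ
  | .cont σ v s => v.FromSource t0 ∧ Stack.FromSource t0 s ∧ Store.FromSource t0 σ

section FromSource

variable {t0 : Tm Ident}

theorem Stack.FromSource.cons {f : Frame} {s : Stack} (hf : f.FromSource t0)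
    (hs : Stack.FromSource t0 s) : Stack.FromSource t0 (f :: s) :=
  List.forall_mem_cons.2 ⟨hf, hs⟩

theorem Stack.FromSource.tail {f : Frame} {s : Stack} (hs : Stack.FromSource t0 (f :: s)) :
    Stack.FromSource t0 s :=
  (List.forall_mem_cons.1 hs).2

theorem Stack.FromSource.head {f : Frame} {s : Stack} (hs : Stack.FromSource t0 (f :: s)) :
    f.FromSource t0 :=
  (List.forall_mem_cons.1 hs).1

theorem Store.FromSource.cons {p : Loc × Storable} {σ : Store} (hp : p.2.FromSource t0)
    (hσ : Store.FromSource t0 σ) : Store.FromSource t0 (p :: σ) :=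
  List.forall_mem_cons.2 ⟨hp, hσ⟩

theorem Store.FromSource.lookupL {σ : Store} {ℓ : Loc} {b : Storable}
    (hσ : Store.FromSource t0 σ) (h : RKNL.lookupL σ ℓ = some b) : b.FromSource t0 :=
  hσ _ (mem_of_lookupL_eq_some h)

theorem Store.FromSource.updL {σ : Store} {ℓ : Loc} {b : Storable}
    (hσ : Store.FromSource t0 σ) (hb : b.FromSource t0) :
    Store.FromSource t0 (RKNL.updL σ ℓ b) := by
  intro p hp
  rcases mem_updL hp with hp | rfl
  exacts [hσ p hp, hb]

theorem Conf.FromSource.step {r : ℕ} {k k' : Conf} (hk : k.FromSource t0)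
    (h : Step r k k') : k'.FromSource t0 := by
  cases h with
  | r1 =>
    obtain ⟨hc, hs, hσ⟩ := hk
    exact ⟨hc.of_app_left, hs.cons hc.of_app_right, hσ⟩
  | r2 =>
    obtain ⟨hc, hs, hσ⟩ := hk
    exact ⟨hc, hs, hσ.cons hc⟩
  | r3 _ hℓ =>
    obtain ⟨-, hs, hσ⟩ := hk
    exact ⟨hσ.lookupL hℓ, hs.cons trivial, hσ⟩
  | r4done _ hℓ =>
    obtain ⟨-, hs, hσ⟩ := hk
    exact ⟨hσ.lookupL hℓ, hs, hσ⟩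
  | r4free =>
    obtain ⟨-, hs, hσ⟩ := hk
    exact ⟨trivial, hs, hσ⟩
  | r5 =>
    obtain ⟨hv, hs, hσ⟩ := hk
    exact ⟨hv, hs.tail, hσ.updL hv⟩
  | r6 =>
    obtain ⟨hv, hs, hσ⟩ := hk
    exact ⟨Tm.Subterm.of_lam hv, hs.tail, hσ.cons hs.head⟩
  | r7 =>
    obtain ⟨hv, hs, hσ⟩ := hk
    exact ⟨Tm.Subterm.of_lam hv, .cons trivial (.cons trivial hs), hσ.cons trivial⟩
  | r8 hℓ =>
    obtain ⟨-, hs, hσ⟩ := hk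
    exact ⟨hσ.lookupL hℓ, hs, hσ⟩
  | r9 =>
    obtain ⟨-, hs, hσ⟩ := hk
    exact ⟨hs.head, hs.tail.cons trivial, hσ⟩
  | r10 | r11 =>
    obtain ⟨-, hs, hσ⟩ := hk
    exact ⟨trivial, hs.tail, hσ⟩

theorem Reach.fromSource {k : Conf} (h : Reach (Conf.init t0) k) : k.FromSource t0 := by
  induction h with
  | refl => exact ⟨.refl t0, by simp [Stack.FromSource], by simp [Store.FromSource]⟩
  | step _ hstep ih => exact ih.step hstep

end FromSource

theorem Φσentry_arg_cons (c : Closure) (s : Stack) : Φσentry (.arg c :: s) = Φσentry s := by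
  funext p
  simp [Φσentry]

theorem Φσ_arg_cons (σ : Store) (c : Closure) (s : Stack) :
    Φσ σ (.arg c :: s) = Φσ σ s := by
  simp only [Φσ, Φσentry_arg_cons]

theorem Φσentry_todo_le (s : Stack) (ℓ : Loc) (c : Closure) :
    Φσentry s (ℓ, .todo c) ≤ Φt c.1 := by
  unfold Φσentry
  split_ifs <;> simp

theorem Φ_beta_add_three_le {σ : Store} {x : Ident} {t t2 : Tm Ident} {e e2 : Env}
    {ℓ ℓ2 : Loc} {s : Stack} :
    Φ (.eval (t, (x, ℓ2) :: e) s ((ℓ2, .todo (t2, e2)) :: σ)) + 3 ≤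
      Φ (.cont σ (.abs x t e ℓ) (.arg (t2, e2) :: s)) + Φt t := by
  have hentry := Φσentry_todo_le s ℓ2 (t2, e2)
  simp only [Φ, Φv, Φs, Φf, List.foldr_cons, Φσ_arg_cons] at hentry ⊢
  simp only [Φσ, List.foldr_cons]
  omega

/-- The β-transition (rule 6) increases the potential by less than the potential
of the initial term: if `k` is reachable from the initial term `t0`, then
`Φ k + Φt t0 > Φ k'`. -/
theorem potential_increase {t0 : Tm Ident} {k k' : Conf}
    (hreach : Reach (Conf.init t0) k) (h : Step 6 k k') :
    Φ k' < Φ k + Φt t0 := by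
  cases h with
  | @r6 σ x t t2 e e2 ℓ ℓ2 s _ =>
    obtain ⟨habs, -, -⟩ := hreach.fromSource
    have hbody : 4 + Φt t ≤ Φt t0 := habs.Φt_le
    have hbeta := @Φ_beta_add_three_le σ x t t2 e e2 ℓ ℓ2 s
    omega

end RKNL
end

section
/- Bilinearity of RKNL: for any execution ρ of the RKNL machine starting from an initial term t₀ and ending in configuration k', the total number of machine steps |ρ| satisfies |ρ| ≤ (|ρ|_β + 1) · Φt(t₀), where |ρ|_β is the number of β-transitions (rule 6) in ρ and Φt is the term potential. -/
set_option autoImplicit false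
set_option maxHeartbeats 1000000

namespace RKNL

/-- `Run k n b k'` : an execution of `n` machine steps from `k` to `k'`, among
which `b` are β-transitions (rule 6). -/
inductive Run : Conf → ℕ → ℕ → Conf → Prop
  | refl (k : Conf) : Run k 0 0 k
  | stepBeta {k k' k'' : Conf} {n b : ℕ} :
      Step 6 k k' → Run k' n b k'' → Run k (n + 1) (b + 1) k''
  | stepOther {k k' k'' : Conf} {n b r : ℕ} :
      r ≠ 6 → Step r k k' → Run k' n b k'' → Run k (n + 1) b k''

/-!
The potential `Φ` drops on every transition except β (rule 6), and rule 6 raises it by less than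
`Φt t₀`: the body it enters comes from `t₀`, so its potential is at most `Φt t₀`. Summing along
the run gives `|ρ| + Φ k' ≤ Φt t₀ + |ρ|_β · Φt t₀`.

These bounds rest on an invariant of reachable configurations. Besides the size bound on the terms
the machine handles, it says that the store is closed and acyclic, and that a location whose memo
frame `ℓ := □` is on the stack cannot be reached from the focus or from the frames above it; so
forcing a thunk (rule 3) or entering an abstraction body (rule 7) releases a store entry that `Φ`
still counts. Finally, an abstraction value points to its placeholder or to a memoized normal form,
which makes rule 8 decrease `Φ`; this relies on the memo frame of a placeholder always sitting
right below a `λx.□` frame.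
-/

theorem lookupL_cons {β : Type} (a : ℕ) (b : β) (l : List (ℕ × β)) (x : ℕ) :
    lookupL ((a, b) :: l) x = if x = a then some b else lookupL l x := rfl

theorem lookupL_updL {β : Type} (l : List (ℕ × β)) (x y : ℕ) (b : β) :
    lookupL (updL l x b) y = if y = x then (lookupL l x).map fun _ => b else lookupL l y := by
  induction l with
  | nil => simp [updL, lookupL]
  | cons p l ih =>
    obtain ⟨a, c⟩ := p
    simp only [updL, List.map_cons] at ih ⊢
    by_cases hax : a = x
    · subst hax
      by_cases hya : y = a <;> simp_all [lookupL_cons]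
    · by_cases hya : y = a <;> simp_all [lookupL_cons, Ne.symm hax]

theorem forall_lookupL_cons {P : Loc → Storable → Prop} {σ : Store} {ℓ : Loc} {sv : Storable}
    (h : ∀ a sv', lookupL σ a = some sv' → P a sv') (hℓ : P ℓ sv) :
    ∀ a sv', lookupL ((ℓ, sv) :: σ) a = some sv' → P a sv' := by
  intro a sv' ha
  rw [lookupL_cons] at ha
  split_ifs at ha with haℓ
  · cases ha; subst haℓ; exact hℓ
  · exact h a sv' ha

theorem forall_lookupL_updL {P : Loc → Storable → Prop} {σ : Store} {ℓ : Loc} {sv : Storable}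
    (h : ∀ a sv', lookupL σ a = some sv' → P a sv') (hℓ : P ℓ sv) :
    ∀ a sv', lookupL (updL σ ℓ sv) a = some sv' → P a sv' := by
  intro a sv' ha
  rw [lookupL_updL] at ha
  split_ifs at ha with haℓ
  · obtain ⟨_, -, rfl⟩ := Option.map_eq_some_iff.1 ha; subst haℓ; exact hℓ
  · exact h a sv' ha

def envLocs (e : Env) : Set Loc := {ℓ | ∃ x, (x, ℓ) ∈ e}

@[simp] theorem envLocs_nil : envLocs [] = ∅ := by simp [envLocs]

@[simp] theorem envLocs_cons (x : Ident) (ℓ : Loc) (e : Env) :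
    envLocs ((x, ℓ) :: e) = insert ℓ (envLocs e) := by
  ext; simp [envLocs, exists_or]

theorem mem_envLocs_of_lookupL {e : Env} {x : Ident} {ℓ : Loc} (h : lookupL e x = some ℓ) :
    ℓ ∈ envLocs e :=
  ⟨x, mem_of_lookupL_eq_some h⟩

def Value.locs : Value → Set Loc
  | .tm _ => ∅
  | .abs _ _ e ℓ => insert ℓ (envLocs e)

def Storable.locs : Storable → Set Loc
  | .pend _ _ e => envLocs e
  | .todo c => envLocs c.2
  | .done v => v.locs

def Frame.locs : Frame → Set Loc
  | .arg c => envLocs c.2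
  | .appL _ => ∅
  | .lamF _ => ∅
  | .cache ℓ => {ℓ}

def stackLocs (s : Stack) : Set Loc := {ℓ | ∃ f ∈ s, ℓ ∈ f.locs}

@[simp] theorem stackLocs_nil : stackLocs [] = ∅ := by simp [stackLocs]

@[simp] theorem stackLocs_cons (f : Frame) (s : Stack) :
    stackLocs (f :: s) = f.locs ∪ stackLocs s := by
  ext; simp [stackLocs]

def Conf.focusLocs : Conf → Set Loc
  | .eval c _ _ => envLocs c.2
  | .cont _ v _ => v.locs

def dom (σ : Store) : Set Loc := {ℓ | ∃ sv, lookupL σ ℓ = some sv}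

theorem notMem_dom {σ : Store} {ℓ : Loc} : ℓ ∉ dom σ ↔ lookupL σ ℓ = none := by
  simp [dom, Option.eq_none_iff_forall_ne_some]

theorem mem_dom_of_lookupL {σ : Store} {ℓ : Loc} {sv : Storable} (h : lookupL σ ℓ = some sv) :
    ℓ ∈ dom σ :=
  ⟨sv, h⟩

theorem dom_cons (ℓ : Loc) (sv : Storable) (σ : Store) :
    dom ((ℓ, sv) :: σ) = insert ℓ (dom σ) := by
  ext a; by_cases h : a = ℓ <;> simp [dom, lookupL_cons, h]

theorem dom_updL (σ : Store) (ℓ : Loc) (sv : Storable) : dom (updL σ ℓ sv) = dom σ := by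
  ext a; by_cases h : a = ℓ <;> simp [dom, lookupL_updL, h]

def Edge (σ : Store) (a b : Loc) : Prop := ∃ sv, lookupL σ a = some sv ∧ b ∈ sv.locs

def reach (σ : Store) (R : Set Loc) : Set Loc := {b | ∃ a ∈ R, Relation.ReflTransGen (Edge σ) a b}

section Reach

variable {σ σ' : Store} {R R' S : Set Loc} {ℓ : Loc}

theorem subset_reach : R ⊆ reach σ R := fun a ha => ⟨a, ha, .refl⟩

theorem reach_mono (h : R ⊆ R') : reach σ R ⊆ reach σ R' :=
  fun _ ⟨a, ha, hab⟩ => ⟨a, h ha, hab⟩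

theorem reach_subset_of_subset_reach (h : R' ⊆ reach σ R) : reach σ R' ⊆ reach σ R := by
  rintro c ⟨b, hb, hbc⟩
  obtain ⟨a, ha, hab⟩ := h hb
  exact ⟨a, ha, hab.trans hbc⟩

theorem locs_subset_reach {sv : Storable} (h : lookupL σ ℓ = some sv) (hℓ : ℓ ∈ R) :
    sv.locs ⊆ reach σ R :=
  fun _ hb => ⟨ℓ, hℓ, .single ⟨sv, h, hb⟩⟩

theorem reach_insert_of_notMem_dom (hℓ : ℓ ∉ dom σ) :
    reach σ (insert ℓ R) ⊆ insert ℓ (reach σ R) := by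
  rintro _ ⟨a, ha | ha, hab⟩
  · subst ha
    rcases hab.cases_head with rfl | ⟨c, ⟨sv, hsv, _⟩, _⟩
    · exact Set.mem_insert _ _
    · exact absurd ⟨sv, hsv⟩ hℓ
  · exact Or.inr ⟨a, ha, hab⟩

theorem mem_reach_of_edge_imp (h : ∀ a b, Edge σ' a b → Edge σ a b ∨ a = ℓ ∧ b ∈ S) {b : Loc}
    (hb : b ∈ reach σ' R) : b ∈ reach σ R ∨ ℓ ∈ reach σ R ∧ b ∈ reach σ S := by
  obtain ⟨a, ha, hab⟩ := hb
  induction hab with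
  | refl => exact Or.inl (subset_reach ha)
  | tail _ hcd ih =>
    rcases h _ _ hcd with hcd | ⟨rfl, hd⟩
    · rcases ih with ⟨a', ha', hac⟩ | ⟨hℓ, a', ha', hac⟩
      · exact Or.inl ⟨a', ha', hac.tail hcd⟩
      · exact Or.inr ⟨hℓ, a', ha', hac.tail hcd⟩
    · rcases ih with hℓ | ⟨hℓ, -⟩ <;> exact Or.inr ⟨hℓ, subset_reach hd⟩

theorem reach_subset_of_edge_imp (h : ∀ a b, Edge σ' a b → Edge σ a b ∨ a = ℓ ∧ b ∈ S) :
    reach σ' R ⊆ reach σ (R ∪ S) := fun _ hb =>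
  (mem_reach_of_edge_imp h hb).elim (reach_mono Set.subset_union_left ·)
    (reach_mono Set.subset_union_right ·.2)

theorem edge_cons {sv : Storable} {a b : Loc} (h : Edge ((ℓ, sv) :: σ) a b) :
    Edge σ a b ∨ a = ℓ ∧ b ∈ sv.locs := by
  obtain ⟨sv', hsv', hb⟩ := h
  rw [lookupL_cons] at hsv'
  split_ifs at hsv' with ha
  · cases hsv'; exact Or.inr ⟨ha, hb⟩
  · exact Or.inl ⟨sv', hsv', hb⟩

theorem edge_updL {v : Value} {a b : Loc} (h : Edge (updL σ ℓ (.done v)) a b) :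
    Edge σ a b ∨ a = ℓ ∧ b ∈ v.locs := by
  obtain ⟨sv', hsv', hb⟩ := h
  rw [lookupL_updL] at hsv'
  split_ifs at hsv' with ha
  · obtain ⟨_, -, rfl⟩ := Option.map_eq_some_iff.1 hsv'
    exact Or.inr ⟨ha, hb⟩
  · exact Or.inl ⟨sv', hsv', hb⟩

end Reach

def Closed (σ : Store) : Prop := ∀ ℓ sv, lookupL σ ℓ = some sv → sv.locs ⊆ dom σ

def Acyclic (σ : Store) : Prop := ∀ ℓ sv, lookupL σ ℓ = some sv → ℓ ∉ reach σ sv.locs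

section Store

variable {σ : Store} {ℓ : Loc} {sv : Storable} {v : Value}

theorem reach_subset_dom (hσ : Closed σ) {R : Set Loc} (hR : R ⊆ dom σ) : reach σ R ⊆ dom σ := by
  rintro _ ⟨a, ha, hab⟩
  induction hab with
  | refl => exact hR ha
  | tail _ hcd _ => obtain ⟨sv, hsv, hd⟩ := hcd; exact hσ _ sv hsv hd

theorem Closed.cons (hσ : Closed σ) (hsv : sv.locs ⊆ dom σ) : Closed ((ℓ, sv) :: σ) := by
  unfold Closed
  rw [dom_cons]
  exact forall_lookupL_cons (fun a sv' h => (hσ a sv' h).trans (Set.subset_insert _ _))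
    (hsv.trans (Set.subset_insert _ _))

theorem Closed.update (hσ : Closed σ) (hv : v.locs ⊆ dom σ) : Closed (updL σ ℓ (.done v)) := by
  unfold Closed
  rw [dom_updL]
  exact forall_lookupL_updL hσ hv

theorem Acyclic.cons (hc : Closed σ) (ha : Acyclic σ) (hℓ : ℓ ∉ dom σ) (hsv : sv.locs ⊆ dom σ) :
    Acyclic ((ℓ, sv) :: σ) := by
  have hold {R : Set Loc} (hR : R ⊆ dom σ) : reach ((ℓ, sv) :: σ) R ⊆ reach σ R := fun _ hb =>
    (mem_reach_of_edge_imp (fun _ _ => edge_cons) hb).resolve_right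
      fun h => hℓ (reach_subset_dom hc hR h.1)
  intro a sv' h
  rw [lookupL_cons] at h
  split_ifs at h with haℓ
  · cases h; subst haℓ
    exact fun hr => hℓ (reach_subset_dom hc hsv (hold hsv hr))
  · exact fun hr => ha a sv' h (hold (hc a sv' h) hr)

theorem Acyclic.update (ha : Acyclic σ) (hv : ℓ ∉ reach σ v.locs) :
    Acyclic (updL σ ℓ (.done v)) := by
  intro a sv' h hr
  rcases mem_reach_of_edge_imp (fun _ _ => edge_updL) hr with hr' | ⟨hℓ, hav⟩
  · rw [lookupL_updL] at h
    split_ifs at h with haℓ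
    · subst haℓ; obtain ⟨_, -, rfl⟩ := Option.map_eq_some_iff.1 h; exact hv hr'
    · exact ha a sv' h hr'
  · rw [lookupL_updL] at h
    split_ifs at h with haℓ
    · subst haℓ; obtain ⟨_, -, rfl⟩ := Option.map_eq_some_iff.1 h; exact hv hℓ
    · -- `v` would reach `a`, whose entry reaches `ℓ`
      exact hv (reach_subset_of_subset_reach (Set.singleton_subset_iff.2 hav)
        (reach_subset_of_subset_reach (locs_subset_reach h (Set.mem_singleton a)) hℓ))

end Store

def Pending (σ : Store) (ℓ : Loc) : Prop := ℓ ∈ dom σ ∧ ∀ v, lookupL σ ℓ ≠ some (.done v)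

theorem Pending.of_lookupL {σ : Store} {ℓ : Loc} {sv : Storable} (h : lookupL σ ℓ = some sv)
    (hsv : ∀ v, sv ≠ .done v) : Pending σ ℓ :=
  ⟨mem_dom_of_lookupL h, fun v hv => hsv v (Option.some.inj (h.symm.trans hv))⟩

theorem Pending.congr {σ σ' : Store} {ℓ : Loc} (h : Pending σ ℓ)
    (heq : lookupL σ' ℓ = lookupL σ ℓ) : Pending σ' ℓ :=
  ⟨by obtain ⟨sv, hsv⟩ := h.1; exact ⟨sv, heq.trans hsv⟩, fun v => heq ▸ h.2 v⟩

/-- `R` collects the locations the evaluation in progress may consult, frame by frame down the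
stack: no memo frame `ℓ := □` is reachable from them, so no thunk ever needs its own value. -/
def Guarded (σ : Store) : Set Loc → Stack → Prop
  | _, [] => True
  | R, f :: s => (∀ ℓ, f = .cache ℓ → Pending σ ℓ ∧ ℓ ∉ reach σ R) ∧ Guarded σ (R ∪ f.locs) s

namespace Guarded

variable {σ σ' : Store} {R R' : Set Loc} {ℓ : Loc}

theorem cache_notMem {s : Stack} (h : Guarded σ R s) (hℓ : ℓ ∈ R) : .cache ℓ ∉ s := by
  induction s generalizing R with
  | nil => simp
  | cons f s ih =>
    obtain ⟨hf, hs⟩ := h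
    intro hm
    rcases List.mem_cons.1 hm with rfl | hs'
    · exact (hf ℓ rfl).2 (subset_reach hℓ)
    · exact ih hs (Or.inl hℓ) hs'

theorem transfer (hpend : ∀ ℓ, Pending σ ℓ → ℓ ∉ reach σ R → Pending σ' ℓ)
    (hreach : ∀ X ℓ, Pending σ ℓ → ℓ ∈ reach σ' (R' ∪ X) → ℓ ∈ reach σ (R ∪ X)) {s : Stack}
    (h : Guarded σ R s) : Guarded σ' R' s := by
  suffices ∀ X, Guarded σ (R ∪ X) s → Guarded σ' (R' ∪ X) s by
    simpa using this ∅ (by simpa using h)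
  clear h
  induction s with
  | nil => simp [Guarded]
  | cons f s ih =>
    rintro X ⟨hf, hs⟩
    refine ⟨fun ℓ hfℓ => ?_, ?_⟩
    · obtain ⟨hp, hr⟩ := hf ℓ hfℓ
      exact ⟨hpend ℓ hp fun h => hr (reach_mono Set.subset_union_left h),
        fun h => hr (hreach X ℓ hp h)⟩
    · rw [Set.union_assoc] at hs ⊢
      exact ih _ hs

theorem mono {s : Stack} (h : Guarded σ R s) (hR : R' ⊆ reach σ R) : Guarded σ R' s :=
  h.transfer (fun _ hp _ => hp) fun _ _ _ hr =>
    reach_subset_of_subset_reach (Set.union_subset (hR.trans (reach_mono Set.subset_union_left))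
      (Set.subset_union_right.trans subset_reach)) hr

theorem cons {sv : Storable} {s : Stack} (h : Guarded σ R s) (hℓ : ℓ ∉ dom σ)
    (hsv : sv.locs ⊆ reach σ R) (hR : R' ⊆ insert ℓ (reach σ R)) :
    Guarded ((ℓ, sv) :: σ) R' s := by
  have hne {a : Loc} (ha : Pending σ a) : a ≠ ℓ := by rintro rfl; exact hℓ ha.1
  refine h.transfer (fun a ha _ => ha.congr (by rw [lookupL_cons, if_neg (hne ha)]))
    fun X a ha hr => ?_
  have hsub : R' ∪ X ∪ sv.locs ⊆ insert ℓ (reach σ (R ∪ X)) := by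
    refine Set.union_subset (Set.union_subset (hR.trans ?_) ?_) (hsv.trans ?_)
    · exact Set.insert_subset_insert (reach_mono Set.subset_union_left)
    · exact Set.subset_union_right.trans (subset_reach.trans (Set.subset_insert _ _))
    · exact (reach_mono Set.subset_union_left).trans (Set.subset_insert _ _)
  rcases reach_insert_of_notMem_dom hℓ
    (reach_mono hsub (reach_subset_of_edge_imp (fun _ _ => edge_cons) hr)) with rfl | hr'
  · exact absurd rfl (hne ha)
  · exact reach_subset_of_subset_reach le_rfl hr'

theorem update {v : Value} {s : Stack} (h : Guarded σ (v.locs ∪ {ℓ}) s) :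
    Guarded (updL σ ℓ (.done v)) v.locs s := by
  refine h.transfer (fun a ha hr => ?_) fun X a _ hr => ?_
  · have haℓ : a ≠ ℓ := by rintro rfl; exact hr (subset_reach (Or.inr rfl))
    exact ha.congr (by rw [lookupL_updL, if_neg haℓ])
  · refine reach_mono ?_ (reach_subset_of_edge_imp (fun _ _ => edge_updL) hr)
    intro b hb; simp only [Set.mem_union] at hb ⊢; tauto

theorem enter_lam {x x' : Ident} {t : Tm Ident} {e : Env} {ℓ2 : Loc} {s : Stack}
    (hG : Guarded σ (insert ℓ (envLocs e)) s) (hac : Acyclic σ)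
    (hℓ : lookupL σ ℓ = some (.pend x t e)) (hℓ2 : ℓ2 ∉ dom σ) :
    Guarded ((ℓ2, .done (.tm (.var x'))) :: σ) (envLocs ((x, ℓ2) :: e))
      (.lamF x' :: .cache ℓ :: s) := by
  have hne : ℓ ≠ ℓ2 := fun h => hℓ2 (h ▸ mem_dom_of_lookupL hℓ)
  refine ⟨fun _ h => Frame.noConfusion h, fun _ h => ?_, hG.cons hℓ2 (Set.empty_subset _) ?_⟩
  · cases h
    refine ⟨.of_lookupL (sv := .pend x t e) (by rw [lookupL_cons, if_neg hne, hℓ]) nofun,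
      fun hr => ?_⟩
    have hr' := reach_subset_of_edge_imp (fun _ _ => edge_cons) hr
    simp only [envLocs_cons, Frame.locs, Storable.locs, Value.locs, Set.union_empty] at hr'
    rcases reach_insert_of_notMem_dom hℓ2 hr' with h | h
    · exact hne h
    ·
      exact hac ℓ _ hℓ h
  · intro a ha
    simp only [envLocs_cons, Frame.locs, Set.union_empty, Set.mem_union, Set.mem_insert_iff,
      Set.mem_singleton_iff] at ha
    rcases ha with (rfl | ha) | rfl
    · exact .inl rfl
    · exact .inr (subset_reach (.inr ha))
    · exact .inr (subset_reach (.inl rfl))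

end Guarded

def Value.Bounded (B : ℕ) : Value → Prop
  | .tm _ => True
  | .abs _ t _ _ => Φt t ≤ B

def Storable.Bounded (B : ℕ) : Storable → Prop
  | .pend _ _ _ => True
  | .todo c => Φt c.1 ≤ B
  | .done v => v.Bounded B

def Frame.Bounded (B : ℕ) : Frame → Prop
  | .arg c => Φt c.1 ≤ B
  | _ => True

def Conf.FocusBounded (B : ℕ) : Conf → Prop
  | .eval c _ _ => Φt c.1 ≤ B
  | .cont _ v _ => v.Bounded B

structure Conf.Bounded (B : ℕ) (k : Conf) : Prop where
  focus : k.FocusBounded B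
  stack : ∀ f ∈ k.stack, f.Bounded B
  store : ∀ ℓ sv, lookupL k.store ℓ = some sv → sv.Bounded B

theorem Step.bounded {r B : ℕ} {k k' : Conf} (hs : Step r k k') (h : k.Bounded B) :
    k'.Bounded B := by
  obtain ⟨hfoc, hstk, hsto⟩ := h
  cases hs with
  | @r1 t1 t2 =>
    simp only [Conf.FocusBounded, Φt] at hfoc
    exact ⟨show Φt t1 ≤ B by omega, List.forall_mem_cons.2 ⟨show Φt t2 ≤ B by omega, hstk⟩, hsto⟩
  | @r2 _ t =>
    simp only [Conf.FocusBounded, Φt] at hfoc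
    exact ⟨show Φt t ≤ B by omega, hstk, forall_lookupL_cons hsto trivial⟩
  | r3 _ hσ => exact ⟨hsto _ _ hσ, List.forall_mem_cons.2 ⟨trivial, hstk⟩, hsto⟩
  | r4done _ hσ => exact ⟨hsto _ _ hσ, hstk, hsto⟩
  | r4free => exact ⟨trivial, hstk, hsto⟩
  | r5 => exact ⟨hfoc, fun f hf => hstk f (.tail _ hf), forall_lookupL_updL hsto hfoc⟩
  | r6 =>
    exact ⟨hfoc, fun f hf => hstk f (.tail _ hf), forall_lookupL_cons hsto (hstk _ (.head _))⟩
  | r7 =>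
    exact ⟨hfoc, List.forall_mem_cons.2 ⟨trivial, List.forall_mem_cons.2 ⟨trivial, hstk⟩⟩,
      forall_lookupL_cons hsto trivial⟩
  | r8 hσ => exact ⟨hsto _ _ hσ, hstk, hsto⟩
  | r9 =>
    exact ⟨hstk _ (.head _), List.forall_mem_cons.2 ⟨trivial, fun f hf => hstk f (.tail _ hf)⟩,
      hsto⟩
  | r10 | r11 => exact ⟨trivial, fun f hf => hstk f (.tail _ hf), hsto⟩

def IsPend (σ : Store) (ℓ : Loc) : Prop := ∃ x t e, lookupL σ ℓ = some (.pend x t e)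

def Value.Linked (σ : Store) : Value → Prop
  | .tm _ => True
  | .abs x t e ℓ => lookupL σ ℓ = some (.pend x t e) ∨ ∃ u, lookupL σ ℓ = some (.done (.tm u))

def StoreLinked (σ : Store) : Prop := ∀ ℓ v, lookupL σ ℓ = some (.done v) → v.Linked σ

def Conf.Linked : Conf → Prop
  | .eval _ _ σ => StoreLinked σ
  | .cont σ v _ => v.Linked σ ∧ StoreLinked σ

section Linked

variable {σ : Store} {ℓ a : Loc} {sv : Storable} {v w : Value}

theorem IsPend.of_cons (h : IsPend ((ℓ, sv) :: σ) a) :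
    (a = ℓ ∧ ∃ x t e, sv = .pend x t e) ∨ IsPend σ a := by
  obtain ⟨x, t, e, h⟩ := h
  rw [lookupL_cons] at h
  split_ifs at h with haℓ
  · cases h; exact Or.inl ⟨haℓ, x, t, e, rfl⟩
  · exact Or.inr ⟨x, t, e, h⟩

theorem IsPend.of_update (h : IsPend (updL σ ℓ (.done v)) a) : IsPend σ a ∧ a ≠ ℓ := by
  obtain ⟨x, t, e, h⟩ := h
  rw [lookupL_updL] at h
  split_ifs at h with haℓ
  · obtain ⟨_, -, h⟩ := Option.map_eq_some_iff.1 h; cases h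
  · exact ⟨⟨x, t, e, h⟩, haℓ⟩

theorem Value.Linked.cons (h : w.Linked σ) (hℓ : ℓ ∉ dom σ) : w.Linked ((ℓ, sv) :: σ) := by
  cases w with
  | tm => trivial
  | abs x t e b =>
    have hb : b ≠ ℓ := by
      rintro rfl
      rcases h with h | ⟨_, h⟩ <;> exact hℓ (mem_dom_of_lookupL h)
    simpa only [Value.Linked, lookupL_cons, if_neg hb] using h

theorem Value.Linked.eq_pend {x x0 : Ident} {t t0 : Tm Ident} {e e0 : Env}
    (h : (Value.abs x t e ℓ).Linked σ) (hℓ : lookupL σ ℓ = some (.pend x0 t0 e0)) :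
    lookupL σ ℓ = some (.pend x t e) :=
  h.resolve_right fun ⟨_, h⟩ => by rw [hℓ] at h; cases h

theorem Value.Linked.exists_tm {x : Ident} {t : Tm Ident} {e : Env}
    (h : (Value.abs x t e ℓ).Linked σ) (hℓ : lookupL σ ℓ = some (.done v)) : ∃ u, v = .tm u := by
  rcases h with h | ⟨u, h⟩ <;> rw [hℓ] at h <;> cases h
  exact ⟨u, rfl⟩

theorem StoreLinked.cons (h : StoreLinked σ) (hℓ : ℓ ∉ dom σ)
    (hsv : ∀ v, sv = .done v → v.Linked ((ℓ, sv) :: σ)) : StoreLinked ((ℓ, sv) :: σ) := by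
  intro b v hb
  rw [lookupL_cons] at hb
  split_ifs at hb
  · cases hb; exact hsv v rfl
  · exact (h b v hb).cons hℓ

theorem Value.Linked.update (h : w.Linked σ) (hℓ : Pending σ ℓ)
    (hv : IsPend σ ℓ → ∃ u, v = .tm u) : w.Linked (updL σ ℓ (.done v)) := by
  cases w with
  | tm => trivial
  | abs x t e b =>
    by_cases hb : b = ℓ
    · subst hb
      rcases h with h | ⟨u, h⟩
      · obtain ⟨u, rfl⟩ := hv ⟨x, t, e, h⟩
        exact Or.inr ⟨u, by rw [lookupL_updL, if_pos rfl, h]; rfl⟩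
      · exact absurd h (hℓ.2 _)
    · simpa only [Value.Linked, lookupL_updL, if_neg hb] using h

theorem StoreLinked.update (h : StoreLinked σ) (hℓ : Pending σ ℓ)
    (hv : IsPend σ ℓ → ∃ u, v = .tm u) (hvl : v.Linked σ) :
    StoreLinked (updL σ ℓ (.done v)) := by
  intro b w hb
  rw [lookupL_updL] at hb
  split_ifs at hb
  · obtain ⟨_, -, h'⟩ := Option.map_eq_some_iff.1 hb
    cases h'
    exact hvl.update hℓ hv
  · exact (h b w hb).update hℓ hv

end Linked

def Conf.IsNormal : Conf → Prop
  | .cont _ (.tm _) _ => True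
  | _ => False

theorem Conf.IsNormal.exists_tm {σ : Store} {v : Value} {s : Stack}
    (h : (Conf.cont σ v s).IsNormal) : ∃ u, v = .tm u := by
  cases v with
  | tm u => exact ⟨u, rfl⟩
  | abs => exact h.elim

/-- `top` means that the machine holds a normal form, about to be memoized. -/
def PendUnderLam (P : Loc → Prop) (s : Stack) (top : Prop) : Prop :=
  ∀ ℓ, P ℓ → .cache ℓ ∈ s →
    (∃ y, [.lamF y, .cache ℓ] <:+: s) ∨ (s.head? = some (.cache ℓ) ∧ top)

namespace PendUnderLam

variable {P P' : Loc → Prop} {s : Stack} {top top' : Prop} {f : Frame} {ℓ : Loc}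

theorem mono (h : PendUnderLam P s top) (hP : ∀ ℓ, P' ℓ → .cache ℓ ∈ s → P ℓ)
    (htop : top → top') : PendUnderLam P' s top' := fun ℓ hℓ hm =>
  (h ℓ (hP ℓ hℓ hm) hm).imp_right (And.imp_right htop)

theorem push (h : PendUnderLam P s False) (hf : ∀ ℓ, f = .cache ℓ → ¬ P ℓ) :
    PendUnderLam P (f :: s) False := by
  intro ℓ hℓ hm
  rcases List.mem_cons.1 hm with rfl | hm
  · exact absurd hℓ (hf ℓ rfl)
  · obtain ⟨y, hy⟩ | ⟨-, ⟨⟩⟩ := h ℓ hℓ hm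
    exact Or.inl ⟨y, List.infix_cons hy⟩

theorem push_lam_cache {x : Ident} (h : PendUnderLam P s False) :
    PendUnderLam P (.lamF x :: .cache ℓ :: s) False := by
  intro a ha hm
  by_cases haℓ : a = ℓ
  · subst haℓ
    exact Or.inl ⟨x, (List.prefix_append [.lamF x, .cache a] s).isInfix⟩
  · have hm' : Frame.cache a ∈ s := by simpa [haℓ] using hm
    obtain ⟨y, hy⟩ | ⟨-, ⟨⟩⟩ := h a ha hm'
    exact Or.inl ⟨y, List.infix_cons (List.infix_cons hy)⟩

theorem pop (h : PendUnderLam P (f :: s) top) (hf : ∀ ℓ, f = .cache ℓ → ¬ P ℓ) :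
    PendUnderLam P s (∃ y, f = .lamF y) := by
  intro ℓ hℓ hm
  rcases h ℓ hℓ (.tail _ hm) with ⟨y, hy⟩ | ⟨hhead, -⟩
  · rcases List.infix_cons_iff.1 hy with hy | hy
    · rw [List.cons_prefix_cons, List.singleton_prefix_iff_head?_eq_some] at hy
      exact Or.inr ⟨hy.2, y, hy.1.symm⟩
    · exact Or.inl ⟨y, hy⟩
  · cases hhead
    exact absurd hℓ (hf ℓ rfl)

theorem top_of_cache (h : PendUnderLam P (.cache ℓ :: s) top) (hℓ : P ℓ)
    (hs : .cache ℓ ∉ s) : top := by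
  rcases h ℓ hℓ (.head _) with ⟨y, hy⟩ | ⟨-, htop⟩
  · rcases List.infix_cons_iff.1 hy with hy | hy
    · simp at hy
    · exact absurd (hy.mem (by simp)) hs
  · exact htop

end PendUnderLam

structure WellFormed (k : Conf) : Prop where
  closed : Closed k.store
  acyclic : Acyclic k.store
  focus_dom : k.focusLocs ⊆ dom k.store
  stack_dom : stackLocs k.stack ⊆ dom k.store
  guarded : Guarded k.store k.focusLocs k.stack

section Step

variable {r : ℕ} {k k' : Conf}

theorem Step.closed (hs : Step r k k') (hk : WellFormed k) : Closed k'.store := by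
  obtain ⟨hcl, -, hF, hS, -⟩ := hk
  cases hs
  case r2 => exact hcl.cons hF
  case r5 => exact hcl.update hF
  case r6 => exact hcl.cons fun _ h => hS ⟨_, .head _, h⟩
  case r7 => exact hcl.cons (Set.empty_subset _)
  all_goals exact hcl

theorem Step.acyclic (hs : Step r k k') (hk : WellFormed k) : Acyclic k'.store := by
  obtain ⟨hcl, hac, hF, hS, hG⟩ := hk
  cases hs
  case r2 h => exact hac.cons hcl (notMem_dom.2 h) hF
  case r5 => exact hac.update (hG.1 _ rfl).2
  case r6 h => exact hac.cons hcl (notMem_dom.2 h) fun _ h => hS ⟨_, .head _, h⟩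
  case r7 _ _ _ hℓ2 _ => exact hac.cons hcl (notMem_dom.2 hℓ2) (Set.empty_subset _)
  all_goals exact hac

theorem Step.locs_subset_dom (hs : Step r k k') (hk : WellFormed k) :
    k'.focusLocs ⊆ dom k'.store ∧ stackLocs k'.stack ⊆ dom k'.store := by
  obtain ⟨hcl, -, hF, hS, -⟩ := hk
  cases hs <;>
    simp only [Conf.focusLocs, Conf.stack, Conf.store, Value.locs, Frame.locs,
      stackLocs_cons, envLocs_cons, dom_cons, dom_updL, Set.union_subset_iff,
      Set.insert_subset_iff, Set.singleton_subset_iff, Set.empty_subset, true_and] at hF hS ⊢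
  case r1 => exact ⟨hF, hF, hS⟩
  case r2 => exact ⟨⟨.inl rfl, hF.trans (Set.subset_insert _ _)⟩, hS.trans (Set.subset_insert _ _)⟩
  case r3 hσ => exact ⟨hcl _ _ hσ, mem_dom_of_lookupL hσ, hS⟩
  case r4done hσ => exact ⟨hcl _ _ hσ, hS⟩
  case r5 => exact ⟨hF, hS.2⟩
  case r6 =>
    exact ⟨⟨.inl rfl, hF.2.trans (Set.subset_insert _ _)⟩, hS.2.trans (Set.subset_insert _ _)⟩
  case r7 =>
    exact ⟨⟨.inl rfl, hF.2.trans (Set.subset_insert _ _)⟩, .inr hF.1,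
      hS.trans (Set.subset_insert _ _)⟩
  case r8 hσ _ _ => exact ⟨hcl _ _ hσ, hS⟩
  all_goals exact hS

theorem Step.guarded (hs : Step r k k') (hk : WellFormed k) (hl : k.Linked) :
    Guarded k'.store k'.focusLocs k'.stack := by
  obtain ⟨-, hac, -, -, hG⟩ := hk
  cases hs <;> dsimp only [Conf.store, Conf.stack, Conf.focusLocs] at hac hG hl ⊢
  case r1 =>
    exact ⟨fun _ h => Frame.noConfusion h, hG.mono (Set.union_subset subset_reach subset_reach)⟩
  case r2 h =>
    exact hG.cons (notMem_dom.2 h) subset_reach (Set.insert_subset_insert subset_reach)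
  case r3 he hσ =>
    have hℓ := mem_envLocs_of_lookupL he
    refine ⟨fun _ h => ?_, hG.mono (Set.union_subset (locs_subset_reach hσ hℓ)
      (Set.singleton_subset_iff.2 (subset_reach hℓ)))⟩
    cases h
    exact ⟨.of_lookupL hσ nofun, hac _ _ hσ⟩
  case r4done he hσ => exact hG.mono (locs_subset_reach hσ (mem_envLocs_of_lookupL he))
  case r4free => exact hG.mono (Set.empty_subset _)
  case r5 => exact hG.2.update
  case r6 h =>
    refine hG.2.cons (notMem_dom.2 h) (Set.subset_union_right.trans subset_reach) ?_
    rw [envLocs_cons]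
    exact Set.insert_subset_insert
      (((Set.subset_insert _ _).trans Set.subset_union_left).trans subset_reach)
  case r7 hσ _ _ hℓ2 _ =>
    exact hG.enter_lam hac (hl.1.eq_pend hσ) (notMem_dom.2 hℓ2)
  case r8 hσ _ _ => exact hG.mono (locs_subset_reach hσ (Set.mem_insert _ _))
  case r9 =>
    exact ⟨fun _ h => Frame.noConfusion h, hG.2.mono
      (Set.union_subset (Set.subset_union_right.trans subset_reach) (Set.empty_subset _))⟩
  all_goals exact hG.2.mono (Set.empty_subset _)

theorem Step.wellFormed (hs : Step r k k') (hk : WellFormed k) (hl : k.Linked) :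
    WellFormed k' :=
  ⟨hs.closed hk, hs.acyclic hk, (hs.locs_subset_dom hk).1, (hs.locs_subset_dom hk).2,
    hs.guarded hk hl⟩

theorem Step.linked (hs : Step r k k') (hk : WellFormed k) (hl : k.Linked)
    (hp : PendUnderLam (IsPend k.store) k.stack k.IsNormal) : k'.Linked := by
  obtain ⟨-, -, -, hS, hG⟩ := hk
  cases hs <;> dsimp only [Conf.store, Conf.stack, Conf.focusLocs, Conf.Linked] at hS hG hl hp ⊢
  case r2 h => exact ⟨.inl (by rw [lookupL_cons, if_pos rfl]), hl.cons (notMem_dom.2 h) nofun⟩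
  case r4done hσ => exact ⟨hl _ _ hσ, hl⟩
  case r4free => exact ⟨trivial, hl⟩
  case r5 =>
    have hpend := (hG.1 _ rfl).1
    have hv : IsPend _ _ → _ := fun h =>
      (hp.top_of_cache h (hG.2.cache_notMem (.inr rfl))).exists_tm
    exact ⟨hl.1.update hpend hv, hl.2.update hpend hv hl.1⟩
  case r6 h => exact hl.2.cons (notMem_dom.2 h) nofun
  case r7 hℓ2 _ => exact hl.2.cons (notMem_dom.2 hℓ2) fun _ h => by cases h; trivial
  case r8 hσ _ _ => exact ⟨hl.2 _ _ hσ, hl.2⟩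
  case r9 => exact hl.2
  case r10 | r11 => exact ⟨trivial, hl.2⟩
  all_goals exact hl

theorem Step.pendUnderLam (hs : Step r k k') (hk : WellFormed k)
    (hp : PendUnderLam (IsPend k.store) k.stack k.IsNormal) :
    PendUnderLam (IsPend k'.store) k'.stack k'.IsNormal := by
  obtain ⟨-, -, -, hS, -⟩ := hk
  cases hs <;> dsimp only [Conf.store, Conf.stack, Conf.IsNormal] at hS hp ⊢
  case r1 => exact hp.push nofun
  case r2 h =>
    refine hp.mono (fun a ha hm => ha.of_cons.resolve_left fun ⟨rfl, _⟩ => ?_) id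
    exact notMem_dom.2 h (hS ⟨_, hm, rfl⟩)
  case r3 hσ => exact hp.push fun _ h ⟨_, _, _, h'⟩ => by cases h; rw [hσ] at h'; cases h'
  case r5 σ v ℓ s =>
    have hp' : PendUnderLam (fun a => IsPend σ a ∧ a ≠ ℓ) s False := by
      refine ((hp.mono (fun _ h _ => h.1) id).pop fun _ h ⟨_, hne⟩ =>
        hne (Frame.cache.inj h).symm).mono (fun _ h _ => h) ?_
      rintro ⟨_, ⟨⟩⟩
    exact hp'.mono (fun _ h _ => h.of_update) False.elim
  case r6 =>
    exact (hp.pop nofun).mono (fun _ h _ => h.of_cons.resolve_left (by rintro ⟨-, _, _, _, ⟨⟩⟩))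
      fun ⟨_, h⟩ => Frame.noConfusion h
  case r7 =>
    exact (hp.mono (fun _ h _ => h.of_cons.resolve_left (by rintro ⟨-, _, _, _, ⟨⟩⟩))
      id).push_lam_cache
  case r9 =>
    exact ((hp.pop nofun).mono (fun _ h _ => h) fun ⟨_, h⟩ => Frame.noConfusion h).push nofun
  case r10 | r11 => exact (hp.pop nofun).mono (fun _ h _ => h) fun _ => trivial
  all_goals exact hp.mono (fun _ h _ => h) False.elim

end Step

def Storable.weight : Storable → ℕ
  | .pend _ t _ => 2 + Φt t
  | .todo c => Φt c.1
  | .done _ => 0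

theorem Φσentry_eq (s : Stack) (p : Loc × Storable) :
    Φσentry s p = if .cache p.1 ∈ s then 0 else p.2.weight := by
  obtain ⟨a, sv⟩ := p
  cases sv <;> rfl

theorem Φσ_cons (p : Loc × Storable) (σ : Store) (s : Stack) :
    Φσ (p :: σ) s = Φσentry s p + Φσ σ s := rfl

theorem Φσ_eq_sum (σ : Store) (s : Stack) : Φσ σ s = (σ.map (Φσentry s)).sum := by
  induction σ with
  | nil => rfl
  | cons p σ ih => rw [Φσ_cons, ih, List.map_cons, List.sum_cons]

theorem Φs_cons (f : Frame) (s : Stack) : Φs (f :: s) = Φf f + Φs s := rfl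

theorem Φσ_cons_le (p : Loc × Storable) (σ : Store) (s : Stack) :
    Φσ (p :: σ) s ≤ p.2.weight + Φσ σ s := by
  rw [Φσ_cons, Φσentry_eq]; split_ifs <;> omega

theorem Φσ_push (σ : Store) (f : Frame) (hf : ∀ ℓ, f ≠ .cache ℓ) (s : Stack) :
    Φσ σ (f :: s) = Φσ σ s := by
  rw [Φσ_eq_sum, Φσ_eq_sum]
  congr 1
  refine List.map_congr_left fun p _ => ?_
  have hne : Frame.cache p.1 ≠ f := fun h => hf _ h.symm
  simp only [Φσentry_eq, List.mem_cons, hne, false_or]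

theorem Φσ_push_cache_le (σ : Store) (ℓ : Loc) (s : Stack) :
    Φσ σ (.cache ℓ :: s) ≤ Φσ σ s := by
  rw [Φσ_eq_sum, Φσ_eq_sum]
  refine List.sum_le_sum fun p _ => ?_
  simp only [Φσentry_eq, List.mem_cons]
  split_ifs <;> simp_all

theorem Φσ_push_cache {σ : Store} {ℓ : Loc} {sv : Storable} {s : Stack} (hs : .cache ℓ ∉ s)
    (h : lookupL σ ℓ = some sv) : sv.weight + Φσ σ (.cache ℓ :: s) ≤ Φσ σ s := by
  induction σ with
  | nil => cases h
  | cons p σ ih =>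
    obtain ⟨a, sv'⟩ := p
    rw [lookupL_cons] at h
    rw [Φσ_cons, Φσ_cons, Φσentry_eq, Φσentry_eq]
    split_ifs at h with hℓa
    · cases h; subst hℓa
      have := Φσ_push_cache_le σ ℓ s
      simp only [List.mem_cons_self, if_true, hs, if_false]
      omega
    · have hmem : Frame.cache a ∈ Frame.cache ℓ :: s ↔ Frame.cache a ∈ s := by
        simp [Ne.symm hℓa]
      have := ih h
      simp only [hmem]
      omega

theorem Φσ_update (σ : Store) (ℓ : Loc) (v : Value) (s : Stack) :
    Φσ (updL σ ℓ (.done v)) s ≤ Φσ σ (.cache ℓ :: s) := by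
  rw [Φσ_eq_sum, Φσ_eq_sum, updL, List.map_map]
  refine List.sum_le_sum fun p _ => ?_
  simp only [Function.comp_apply]
  split_ifs with hp
  · rw [Φσentry_eq]; split_ifs <;> simp [Storable.weight]
  · have hmem : Frame.cache p.1 ∈ Frame.cache ℓ :: s ↔ Frame.cache p.1 ∈ s := by simp [hp]
    simp only [Φσentry_eq, hmem, le_refl]

theorem Φv_le_one (v : Value) : Φv v ≤ 1 := by cases v <;> simp [Φv]

structure Inv (B : ℕ) (k : Conf) : Prop where
  bounded : k.Bounded B
  wellFormed : WellFormed k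
  linked : k.Linked
  pendUnderLam : PendUnderLam (IsPend k.store) k.stack k.IsNormal

section Potential

variable {r B : ℕ} {k k' : Conf}

theorem Step.inv (hs : Step r k k') (hI : Inv B k) : Inv B k' :=
  ⟨hs.bounded hI.bounded, hs.wellFormed hI.wellFormed hI.linked,
    hs.linked hI.wellFormed hI.linked hI.pendUnderLam,
    hs.pendUnderLam hI.wellFormed hI.pendUnderLam⟩

theorem Step.potential_lt (hs : Step r k k') (hr : r ≠ 6) (hI : Inv B k) : Φ k' < Φ k := by
  obtain ⟨-, ⟨-, -, -, -, hG⟩, hl, -⟩ := hI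
  cases hs <;> dsimp only [Conf.store, Conf.stack, Conf.focusLocs, Conf.Linked] at hG hl
  case r2 x t e s σ ℓ _ =>
    have := Φσ_cons_le (ℓ, .pend x t e) σ s
    simp only [Φ, Φt, Φv, Storable.weight] at this ⊢
    omega
  case r3 he hσ =>
    have := Φσ_push_cache (hG.cache_notMem (mem_envLocs_of_lookupL he)) hσ
    simp only [Φ, Φt, Φs_cons, Φf, Storable.weight] at this ⊢
    omega
  case r4done v _ _ =>
    have := Φv_le_one v
    simp only [Φ, Φt]
    omega
  case r5 σ v ℓ s =>
    have := Φσ_update σ ℓ v s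
    simp only [Φ, Φs_cons, Φf]
    omega
  case r6 => exact absurd rfl hr
  case r7 σ x x' _ t _ e _ ℓ ℓ2 s hσ _ _ _ _ =>
    have h1 := Φσ_push_cache (hG.cache_notMem (Set.mem_insert ℓ _)) (hl.1.eq_pend hσ)
    have h2 := Φσ_cons_le (ℓ2, .done (.tm (.var x'))) σ (.lamF x' :: .cache ℓ :: s)
    simp only [Φ, Φv, Φs_cons, Φf, Storable.weight, Φσ_push σ (.lamF x') nofun (.cache ℓ :: s)]
      at h1 h2 ⊢
    omega
  case r8 hσ _ _ =>
    obtain ⟨u, rfl⟩ := hl.1.exists_tm hσ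
    simp only [Φ, Φv]
    omega
  all_goals simp [Φ, Φt, Φv, Φs_cons, Φf, Φσ_push] <;> omega

theorem Step.potential_beta (hs : Step 6 k k') (hI : Inv B k) : Φ k' < Φ k + B := by
  cases hs with
  | @r6 σ _ t t2 _ e2 _ ℓ2 s _ =>
    have hbody : Φt t ≤ B := hI.bounded.focus
    have := Φσ_cons_le (ℓ2, .todo (t2, e2)) σ s
    simp only [Φ, Φv, Φs_cons, Φf, Storable.weight, Φσ_push σ (.arg (t2, e2)) nofun s] at this ⊢
    omega

end Potential

theorem Run.add_potential_le {k k' : Conf} {n b B : ℕ} (h : Run k n b k') (hI : Inv B k) :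
    n + Φ k' ≤ Φ k + b * B := by
  induction h with
  | refl => simp
  | stepBeta hs _ ih =>
    have := hs.potential_beta hI
    have := ih (hs.inv hI)
    rw [add_one_mul]
    omega
  | stepOther hr hs _ ih =>
    have := hs.potential_lt hr hI
    have := ih (hs.inv hI)
    omega

theorem Inv.init (t : Tm Ident) : Inv (Φt t) (Conf.init t) where
  bounded := ⟨le_rfl, nofun, nofun⟩
  wellFormed :=
    ⟨nofun, nofun, by simp [Conf.init, Conf.focusLocs], by simp [Conf.init, Conf.stack], trivial⟩
  linked := nofun
  pendUnderLam := nofun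

/-- Bilinearity of RKNL: the number of steps of any execution starting from the
initial term `t0` is at most `(|ρ|_β + 1) · Φt t0`. -/
theorem rknl_bilinear {t0 : Tm Ident} {n b : ℕ} {k' : Conf}
    (h : Run (Conf.init t0) n b k') : n ≤ (b + 1) * Φt t0 := by
  have := h.add_potential_le (Inv.init t0)
  have hinit : Φ (Conf.init t0) = Φt t0 := rfl
  rw [add_one_mul]
  omega

end RKNL
end
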